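/- arXiv:1305.3716 — 3 statements merged into one kernel-verified Lean document; each statement's English description precedes it below -/
import Mathlib

section
/- For all integers n ≥ 1 and ℓ ≥ 1, the number of tree-like tableaux of size n+ℓ−1 whose rows 0, 1, …, ℓ−1 are nonempty and all have the same length equals the number of pairs (b, a) where b is a tree-like tableau of size n, a is a non-ambiguous tree with exactly ℓ rows, and the number of dotted cells of b having first coordinate 0 equals the number of columns of a. -/
/-!
Write `l = k + 1`. When rows `0, …, k` of a tree-like tableau form a rectangle, delete rows
`0, …, k - 1`: this leaves a tree-like tableau `b` whose row `0` has a dot in exactly the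
columns dotted in rows `0, …, k`, and those dots, with the empty columns squeezed out, form a
non-ambiguous tree `a` with `k + 1` rows, one column per dot of row `0` of `b`. Conversely,
repeat row `0` of `b` and spread the columns of `a` onto its dots. The tree condition survives
both ways because a dot below row `k` has a dot above it exactly when its column is dotted in
rows `0, …, k`; the sizes match because a tree-like set of points has one point fewer than it
has rows and columns together.
-/

/-- `F` is a Young diagram (as a finite set of cells). -/
def IsYoungDiagram (F : Finset (ℕ × ℕ)) : Prop :=
  ∀ p ∈ F, ∀ x' ≤ p.1, ∀ y' ≤ p.2, (x', y') ∈ F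

/-- `(F, D)` is a tree-like tableau: `F` is a Young diagram and `D ⊆ F` is the set
of dotted cells. -/
def IsTLT (F D : Finset (ℕ × ℕ)) : Prop :=
  IsYoungDiagram F ∧ D ⊆ F ∧ (0, 0) ∈ D ∧
  (∀ p ∈ D, p ≠ (0, 0) →
    Xor' (∃ q ∈ D, q.1 = p.1 ∧ q.2 < p.2) (∃ r ∈ D, r.2 = p.2 ∧ r.1 < p.1)) ∧
  (∀ x : ℕ, (∃ y, (x, y) ∈ F) → ∃ y, (x, y) ∈ D) ∧
  (∀ y : ℕ, (∃ x, (x, y) ∈ F) → ∃ x, (x, y) ∈ D)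

/-- The length of the row of index `x` of a diagram `F`. -/
def rowLen (F : Finset (ℕ × ℕ)) (x : ℕ) : ℕ :=
  (F.filter (fun p => p.1 = x)).card

/-- A non-ambiguous tree: a finite set of points of `ℕ × ℕ`. -/
def IsNAT (A : Finset (ℕ × ℕ)) : Prop :=
  (0, 0) ∈ A ∧
  (∀ p ∈ A, p ≠ (0, 0) →
    Xor' (∃ q ∈ A, q.1 = p.1 ∧ q.2 < p.2) (∃ r ∈ A, r.2 = p.2 ∧ r.1 < p.1)) ∧
  (∀ p ∈ A, (∀ x' < p.1, ∃ q ∈ A, q.1 = x') ∧ (∀ y' < p.2, ∃ q ∈ A, q.2 = y'))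

open Finset

def IsTreeLike (A : Finset (ℕ × ℕ)) : Prop :=
  ∀ p ∈ A, p ≠ (0, 0) → Xor (∃ q ∈ A, q.1 = p.1 ∧ q.2 < p.2) (∃ r ∈ A, r.2 = p.2 ∧ r.1 < p.1)

/-- The tree condition for a block `B` of rows hung below rows whose dotted columns are `C`:
a dot of `B` in a column of `C` has a dot above it. -/
def IsTreeLikeBelow (C : Finset ℕ) (B : Finset (ℕ × ℕ)) : Prop :=
  ∀ p ∈ B, Xor (∃ q ∈ B, q.1 = p.1 ∧ q.2 < p.2) (p.2 ∈ C ∨ ∃ r ∈ B, r.2 = p.2 ∧ r.1 < p.1)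

lemma card_filter_not_exists_lt_eq_card_image {α β γ : Type*} [DecidableEq β] [LinearOrder γ]
    (A : Finset α) (f : α → β) (g : α → γ)
    (hfg : ∀ p ∈ A, ∀ q ∈ A, f p = f q → g p = g q → p = q) :
    #{p ∈ A | ¬∃ q ∈ A, f q = f p ∧ g q < g p} = #(A.image f) := by
  rw [← card_image_of_injOn (f := f)]
  · congr 1
    refine (image_subset_image (filter_subset _ _)).antisymm ?_
    intro _ hx
    obtain ⟨p, hp, rfl⟩ := mem_image.1 hx
    obtain ⟨r, hr, hmin⟩ := exists_min_image {q ∈ A | f q = f p} g ⟨p, by simp [hp]⟩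
    rw [mem_filter] at hr
    refine mem_image.2 ⟨r, mem_filter.2 ⟨hr.1, ?_⟩, hr.2⟩
    rintro ⟨q, hq, hfq, hgq⟩
    exact (hmin q (mem_filter.2 ⟨hq, hfq.trans hr.2⟩)).not_gt hgq
  · intro p hp q hq hpq
    simp only [coe_filter, Set.mem_ofPred_eq, not_exists, not_and, not_lt] at hp hq
    exact hfg p hp.1 q hq.1 hpq (le_antisymm (hp.2 q hq.1 hpq.symm) (hq.2 p hp.1 hpq))

/-- Apart from the root, every point is either not the first of its row or not the first of its
column, and not both; the first points of the rows are as many as the rows, and likewise for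
columns. -/
lemma IsTreeLike.card_add_one {A : Finset (ℕ × ℕ)} (hA : IsTreeLike A) (h0 : (0, 0) ∈ A) :
    #A + 1 = #(A.image Prod.fst) + #(A.image Prod.snd) := by
  have hrows := card_filter_not_exists_lt_eq_card_image A Prod.fst Prod.snd
    fun p _ q _ h1 h2 => Prod.ext h1 h2
  have hcols := card_filter_not_exists_lt_eq_card_image A Prod.snd Prod.fst
    fun p _ q _ h2 h1 => Prod.ext h1 h2
  have hleft := card_filter_add_card_filter_not (s := A)
    (fun p => ∃ q ∈ A, q.1 = p.1 ∧ q.2 < p.2)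
  have habove := card_filter_add_card_filter_not (s := A)
    (fun p => ∃ r ∈ A, r.2 = p.2 ∧ r.1 < p.1)
  have hroot : ∀ p ∈ A, (p ≠ (0, 0) ↔
      (∃ q ∈ A, q.1 = p.1 ∧ q.2 < p.2) ∨ ∃ r ∈ A, r.2 = p.2 ∧ r.1 < p.1) := by
    intro p hp
    refine ⟨fun hne => (hA p hp hne).or, ?_⟩
    rintro (⟨q, -, -, hlt⟩ | ⟨q, -, -, hlt⟩) rfl <;> simp at hlt
  have hsplit : A.erase (0, 0) = {p ∈ A | ∃ q ∈ A, q.1 = p.1 ∧ q.2 < p.2} ∪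
      {p ∈ A | ∃ r ∈ A, r.2 = p.2 ∧ r.1 < p.1} := by
    rw [← filter_or, ← filter_ne']
    exact filter_congr hroot
  have hdisj : Disjoint {p ∈ A | ∃ q ∈ A, q.1 = p.1 ∧ q.2 < p.2}
      {p ∈ A | ∃ r ∈ A, r.2 = p.2 ∧ r.1 < p.1} :=
    disjoint_filter.2 fun p hp hl ha =>
      ((xor_iff_or_and_not_and _ _).1 (hA p hp ((hroot p hp).2 (Or.inl hl)))).2 ⟨hl, ha⟩
  have := card_erase_of_mem h0
  rw [hsplit, card_union_of_disjoint hdisj] at this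
  have := card_pos.2 ⟨_, h0⟩
  omega

def shiftRows (k : ℕ) : ℕ × ℕ ↪ ℕ × ℕ where
  toFun p := (p.1 + k, p.2)
  inj' p q h := by simpa [Prod.ext_iff] using h

@[simp]
lemma shiftRows_apply (k : ℕ) (p : ℕ × ℕ) : shiftRows k p = (p.1 + k, p.2) := rfl

noncomputable def dropRows (k : ℕ) (F : Finset (ℕ × ℕ)) : Finset (ℕ × ℕ) :=
  F.preimage (shiftRows k) (shiftRows k).injective.injOn

def topRows (k : ℕ) (D : Finset (ℕ × ℕ)) : Finset (ℕ × ℕ) := D.filter (·.1 ≤ k)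

/-- The rows of `D` below row `k`, renumbered from `1`. -/
noncomputable def lowerRows (k : ℕ) (D : Finset (ℕ × ℕ)) : Finset (ℕ × ℕ) :=
  (dropRows k D).filter (0 < ·.1)

def topCols (k : ℕ) (D : Finset (ℕ × ℕ)) : Finset ℕ := (topRows k D).image Prod.snd

/-- `T` on top of `B`, the row `x ≥ 1` of `B` becoming the row `x + k`. -/
def stack (k : ℕ) (T B : Finset (ℕ × ℕ)) : Finset (ℕ × ℕ) := T ∪ B.map (shiftRows k)

section Rows

variable {k : ℕ} {D T B : Finset (ℕ × ℕ)} {p : ℕ × ℕ}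

@[simp]
lemma mem_dropRows : p ∈ dropRows k D ↔ (p.1 + k, p.2) ∈ D := by simp [dropRows]

@[simp]
lemma mem_topRows : p ∈ topRows k D ↔ p ∈ D ∧ p.1 ≤ k := mem_filter

@[simp]
lemma mem_lowerRows : p ∈ lowerRows k D ↔ (p.1 + k, p.2) ∈ D ∧ 0 < p.1 := by
  simp [lowerRows]

lemma mem_topCols {c : ℕ} : c ∈ topCols k D ↔ ∃ x ≤ k, (x, c) ∈ D := by
  simp [topCols, and_comm]

lemma mem_topCols_zero {c : ℕ} : c ∈ topCols 0 D ↔ (0, c) ∈ D := by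
  simp [mem_topCols]

lemma mem_stack : p ∈ stack k T B ↔ p ∈ T ∨ ∃ q ∈ B, (q.1 + k, q.2) = p := by
  simp [stack]

lemma forall_mem_stack {P : ℕ × ℕ → Prop} :
    (∀ p ∈ stack k T B, P p) ↔ (∀ p ∈ T, P p) ∧ ∀ p ∈ B, P (p.1 + k, p.2) := by
  rw [stack, forall_mem_union, forall_mem_map]
  rfl

lemma exists_mem_stack {P : ℕ × ℕ → Prop} :
    (∃ p ∈ stack k T B, P p) ↔ (∃ p ∈ T, P p) ∨ ∃ p ∈ B, P (p.1 + k, p.2) := by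
  simp [stack, or_and_right, exists_or]

lemma stack_topRows_lowerRows (k : ℕ) (D : Finset (ℕ × ℕ)) :
    stack k (topRows k D) (lowerRows k D) = D := by
  ext ⟨x, y⟩
  simp only [mem_stack, mem_topRows, mem_lowerRows, Prod.exists, Prod.mk.injEq]
  constructor
  · rintro (⟨h, -⟩ | ⟨a, b, ⟨h, -⟩, rfl, rfl⟩) <;> assumption
  · intro h
    by_cases hx : x ≤ k
    · exact Or.inl ⟨h, hx⟩
    · exact Or.inr ⟨x - k, y, ⟨by rwa [Nat.sub_add_cancel (by omega)], by omega⟩, by omega, rfl⟩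

lemma topRows_stack (hT : ∀ p ∈ T, p.1 ≤ k) (hB : ∀ p ∈ B, 0 < p.1) :
    topRows k (stack k T B) = T := by
  ext p
  simp only [mem_topRows, mem_stack]
  constructor
  · rintro ⟨h | ⟨q, hq, rfl⟩, hle⟩
    · exact h
    · have := hB q hq
      dsimp only at hle
      omega
  · exact fun h => ⟨Or.inl h, hT p h⟩

lemma lowerRows_stack (hT : ∀ p ∈ T, p.1 ≤ k) (hB : ∀ p ∈ B, 0 < p.1) :
    lowerRows k (stack k T B) = B := by
  ext ⟨x, y⟩
  simp only [mem_lowerRows, mem_stack, Prod.exists, Prod.mk.injEq]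
  constructor
  · rintro ⟨h | ⟨a, b, hab, ha, rfl⟩, hx⟩
    · have := hT _ h
      dsimp only at this
      omega
    · obtain rfl : a = x := by omega
      exact hab
  · exact fun h => ⟨Or.inr ⟨x, y, h, rfl, rfl⟩, hB _ h⟩

lemma card_stack (hT : ∀ p ∈ T, p.1 ≤ k) (hB : ∀ p ∈ B, 0 < p.1) :
    #(stack k T B) = #T + #B := by
  rw [stack, card_union_of_disjoint, card_map]
  refine disjoint_left.2 fun p hpT hpB => ?_
  obtain ⟨q, hq, rfl⟩ := mem_map.1 hpB
  have : q.1 + k ≤ k := hT _ hpT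
  have := hB q hq
  omega

end Rows

section TreeLike

variable {k : ℕ} {T B : Finset (ℕ × ℕ)}

lemma isTreeLike_stack_iff (hT : ∀ p ∈ T, p.1 ≤ k) (hB : ∀ p ∈ B, 0 < p.1) :
    IsTreeLike (stack k T B) ↔ IsTreeLike T ∧ IsTreeLikeBelow (T.image Prod.snd) B := by
  refine forall_mem_stack.trans (and_congr (forall₂_congr fun p hp => ?_)
    (forall₂_congr fun p hp => ?_))
  · have := hT p hp
    simp only [exists_mem_stack]
    rw [or_iff_left fun ⟨q, hq, h, _⟩ => by have := hB q hq; omega,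
      or_iff_left fun ⟨q, hq, _, h⟩ => by omega]
  · have := hB p hp
    have hne : (p.1 + k, p.2) ≠ (0, 0) := by
      simp only [ne_eq, Prod.mk.injEq]
      omega
    have habove : (∃ r ∈ T, r.2 = p.2 ∧ r.1 < p.1 + k) ↔ p.2 ∈ T.image Prod.snd :=
      (exists_congr fun r => and_congr_right fun hr =>
        and_iff_left (by have := hT r hr; omega)).trans mem_image.symm
    simp only [exists_mem_stack, add_left_inj, add_lt_add_iff_right, imp_iff_right hne, habove]
    rw [or_iff_right fun ⟨q, hq, h, _⟩ => by have := hT q hq; omega]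

lemma isTreeLike_image_mk_zero {C : Finset ℕ} (hC : 0 ∈ C) : IsTreeLike (C.image (Prod.mk 0)) := by
  intro p hp hne
  obtain ⟨c, -, rfl⟩ := mem_image.1 hp
  refine Or.inl ⟨⟨(0, 0), mem_image_of_mem _ hC, rfl, ?_⟩, fun ⟨r, _, _, hr⟩ => by simp at hr⟩
  simpa [Nat.pos_iff_ne_zero] using hne

lemma IsTreeLike.image_prodMap {A : Finset (ℕ × ℕ)} {h : ℕ → ℕ} {s : Set ℕ} (hA : IsTreeLike A)
    (hh : StrictMonoOn h s) (hs : ∀ p ∈ A, p.2 ∈ s) (h0 : h 0 = 0) :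
    IsTreeLike (A.image (Prod.map id h)) := by
  intro p' hp' hne
  obtain ⟨p, hp, rfl⟩ := mem_image.1 hp'
  have hp0 : p ≠ (0, 0) := by
    rintro rfl
    simp [h0] at hne
  convert hA p hp hp0 using 1 <;> simp only [exists_mem_image, Prod.map_fst, Prod.map_snd, id]
  · exact exists_congr fun q => and_congr_right fun hq =>
      and_congr_right' (hh.lt_iff_lt (hs q hq) (hs p hp))
  · exact exists_congr fun q => and_congr_right fun hq =>
      and_congr_left' (hh.injOn.eq_iff (hs q hq) (hs p hp))

section Rank

variable (S : Finset ℕ)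

lemma strictMonoOn_count_mem : StrictMonoOn (Nat.count (· ∈ S)) S :=
  fun _ hx _ _ hxy => Nat.count_strict_mono hx hxy

lemma strictMonoOn_nth_mem : StrictMonoOn (Nat.nth (· ∈ S)) (Set.Iio #S) := by
  simpa using Nat.nth_strictMonoOn S.finite_toSet

lemma count_nth_mem {j : ℕ} (hj : j < #S) : Nat.count (· ∈ S) (Nat.nth (· ∈ S) j) = j :=
  Nat.count_nth_of_lt_card_finite S.finite_toSet (by simpa using hj)

lemma image_nth_mem_range : (range #S).image (Nat.nth (· ∈ S)) = S := by
  have h := Nat.image_nth_Iio_card (p := (· ∈ S)) S.finite_toSet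
  simp only [finite_toSet_toFinset] at h
  exact coe_injective (by simpa using h)

lemma nth_mem_of_lt_card {j : ℕ} (hj : j < #S) : Nat.nth (· ∈ S) j ∈ S :=
  Nat.nth_mem_of_lt_card S.finite_toSet (by simpa using hj)

lemma image_count_mem : S.image (Nat.count (· ∈ S)) = range #S := by
  calc S.image (Nat.count (· ∈ S))
      _ = ((range #S).image (Nat.nth (· ∈ S))).image (Nat.count (· ∈ S)) := by
        rw [image_nth_mem_range]
      _ = range #S := by
        rw [image_image]
        exact (image_congr fun j hj => count_nth_mem S (mem_range.1 hj)).trans image_id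

lemma count_mem_lt_card {y : ℕ} (hy : y ∈ S) : Nat.count (· ∈ S) y < #S :=
  mem_range.1 (image_count_mem S ▸ mem_image_of_mem _ hy)

end Rank

lemma forall_lt_mem_iff_eq_range {s : Finset ℕ} : (∀ a ∈ s, ∀ b < a, b ∈ s) ↔ s = range #s := by
  refine ⟨fun h => eq_of_subset_of_card_le (fun a ha => ?_) (card_range #s).le, fun h => ?_⟩
  · have : range (a + 1) ⊆ s := fun b hb =>
      (Nat.lt_succ_iff.1 (mem_range.1 hb)).eq_or_lt.elim (· ▸ ha) (h a ha b)
    simpa using card_le_card this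
  · rw [h]
    simpa using fun a ha b hb => hb.trans ha

lemma isNAT_iff {A : Finset (ℕ × ℕ)} :
    IsNAT A ↔ (0, 0) ∈ A ∧ IsTreeLike A ∧ A.image Prod.fst = range #(A.image Prod.fst) ∧
      A.image Prod.snd = range #(A.image Prod.snd) := by
  simp only [IsNAT, ← forall_lt_mem_iff_eq_range, forall_mem_image]
  simp only [mem_image, imp_and, forall_and]
  rfl

lemma image_fst_image_prodMap_id (A : Finset (ℕ × ℕ)) (h : ℕ → ℕ) :
    (A.image (Prod.map id h)).image Prod.fst = A.image Prod.fst := by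
  simp [image_image, Function.comp_def]

lemma image_snd_image_prodMap_id (A : Finset (ℕ × ℕ)) (h : ℕ → ℕ) :
    (A.image (Prod.map id h)).image Prod.snd = (A.image Prod.snd).image h := by
  simp [image_image, Function.comp_def]

section YoungDiagram

variable {F : Finset (ℕ × ℕ)}

lemma mem_iff_lt_rowLen (hF : IsYoungDiagram F) {x y : ℕ} : (x, y) ∈ F ↔ y < rowLen F x := by
  let μ : YoungDiagram := ⟨F, fun a b hba ha => hF a ha b.1 hba.1 b.2 hba.2⟩
  have : rowLen F x = μ.rowLen x := by rw [μ.rowLen_eq_card]; rfl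
  exact this ▸ μ.mem_iff_lt_rowLen

lemma rowLen_eq_rowLen_iff (hF : IsYoungDiagram F) {x x' : ℕ} :
    rowLen F x = rowLen F x' ↔ ∀ y, (x, y) ∈ F ↔ (x', y) ∈ F := by
  simp only [mem_iff_lt_rowLen hF]
  exact ⟨fun h y => h ▸ Iff.rfl, eq_of_forall_lt_iff⟩

lemma rowLen_pos_iff (hF : IsYoungDiagram F) {x : ℕ} : 0 < rowLen F x ↔ (x, 0) ∈ F :=
  (mem_iff_lt_rowLen hF).symm

lemma IsYoungDiagram.dropRows (hF : IsYoungDiagram F) (k : ℕ) : IsYoungDiagram (dropRows k F) :=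
  fun p hp x hx y hy => by
    rw [mem_dropRows] at hp ⊢
    exact hF _ hp _ (by simpa using hx) _ hy

/-- Row `0` of `G` repeated `k + 1` times, followed by the other rows of `G`. -/
def stretchRows (k : ℕ) (G : Finset (ℕ × ℕ)) : Finset (ℕ × ℕ) :=
  range k ×ˢ topCols 0 G ∪ G.map (shiftRows k)

lemma mem_stretchRows {k : ℕ} {G : Finset (ℕ × ℕ)} {p : ℕ × ℕ} :
    p ∈ stretchRows k G ↔ (p.1 - k, p.2) ∈ G := by
  obtain ⟨x, y⟩ := p
  simp only [stretchRows, mem_union, mem_product, mem_range, mem_topCols_zero, mem_map,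
    shiftRows_apply, Prod.exists, Prod.mk.injEq]
  by_cases hx : x < k
  · rw [Nat.sub_eq_zero_of_le hx.le]
    exact ⟨fun h => h.elim And.right fun ⟨a, b, _, hab, _⟩ => by omega, fun h => Or.inl ⟨hx, h⟩⟩
  · refine ⟨fun h => h.elim (fun h => absurd h.1 hx) fun ⟨a, b, h, hab, hb⟩ => ?_,
      fun h => Or.inr ⟨x - k, y, h, by omega, rfl⟩⟩
    rwa [← hab, ← hb, Nat.add_sub_cancel]

lemma IsYoungDiagram.stretchRows (hF : IsYoungDiagram F) (k : ℕ) :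
    IsYoungDiagram (stretchRows k F) :=
  fun p hp x hx y hy => by
    rw [mem_stretchRows] at hp ⊢
    exact hF _ hp _ (Nat.sub_le_sub_right hx k) _ hy

lemma dropRows_stretchRows (k : ℕ) (F : Finset (ℕ × ℕ)) : dropRows k (stretchRows k F) = F := by
  ext p
  simp [mem_stretchRows]

lemma stretchRows_dropRows {k : ℕ} (hF : ∀ x ≤ k, ∀ y, (x, y) ∈ F ↔ (0, y) ∈ F) :
    stretchRows k (dropRows k F) = F := by
  ext ⟨x, y⟩
  rw [mem_stretchRows, mem_dropRows]
  by_cases hx : k ≤ x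
  · rw [Nat.sub_add_cancel hx]
  · rw [Nat.sub_eq_zero_of_le (by omega), zero_add, hF k le_rfl, hF x (by omega)]

lemma rowLen_stretchRows_eq (hF : IsYoungDiagram F) {k x : ℕ} (hx : x ≤ k) :
    rowLen (stretchRows k F) x = rowLen (stretchRows k F) 0 :=
  (rowLen_eq_rowLen_iff (hF.stretchRows k)).2 fun y => by
    simp only [mem_stretchRows, Nat.sub_eq_zero_of_le hx, Nat.zero_sub]

lemma rowLen_stretchRows_pos (hF : IsYoungDiagram F) (h0 : (0, 0) ∈ F) {k x : ℕ} (hx : x ≤ k) :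
    0 < rowLen (stretchRows k F) x :=
  (rowLen_pos_iff (hF.stretchRows k)).2 (by rwa [mem_stretchRows, Nat.sub_eq_zero_of_le hx])

end YoungDiagram

section Parts

variable (k : ℕ) (D : Finset (ℕ × ℕ))

lemma fst_le_of_mem_topRows : ∀ p ∈ topRows k D, p.1 ≤ k := fun _ hp => (mem_topRows.1 hp).2

lemma fst_pos_of_mem_lowerRows : ∀ p ∈ lowerRows k D, 0 < p.1 :=
  fun _ hp => (mem_lowerRows.1 hp).2

lemma isTreeLike_iff_topRows_lowerRows :
    IsTreeLike D ↔ IsTreeLike (topRows k D) ∧ IsTreeLikeBelow (topCols k D) (lowerRows k D) := by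
  conv_lhs => rw [← stack_topRows_lowerRows k D]
  exact isTreeLike_stack_iff (fst_le_of_mem_topRows k D) (fst_pos_of_mem_lowerRows k D)

lemma filter_fst_eq_zero_eq_topRows : D.filter (·.1 = 0) = topRows 0 D := by
  ext
  simp

lemma image_mk_zero_topCols_zero : (topCols 0 D).image (Prod.mk 0) = topRows 0 D := by
  ext ⟨x, y⟩
  simp only [mem_image, mem_topCols_zero, Prod.mk.injEq, mem_topRows, nonpos_iff_eq_zero]
  constructor
  · rintro ⟨y, h, rfl, rfl⟩
    exact ⟨h, rfl⟩
  · rintro ⟨h, rfl⟩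
    exact ⟨y, h, rfl, rfl⟩

lemma card_topCols_zero : #(topCols 0 D) = #(topRows 0 D) := by
  rw [← image_mk_zero_topCols_zero, card_image_of_injective _ (Prod.mk_right_injective 0)]

end Parts

section RowZero

variable (C : Finset ℕ)

lemma fst_le_of_mem_image_mk_zero : ∀ p ∈ C.image (Prod.mk 0), p.1 ≤ 0 := by
  simp

lemma image_snd_image_mk_zero : (C.image (Prod.mk 0)).image Prod.snd = C := by
  simp [image_image, Function.comp_def]

end RowZero

/-- The dots of the tableau cut at row `k`: the top `k + 1` rows collapse onto row `0`,
which keeps a dot in every column they had one in. -/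
noncomputable def cutDots (k : ℕ) (D : Finset (ℕ × ℕ)) : Finset (ℕ × ℕ) :=
  stack 0 ((topCols k D).image (Prod.mk 0)) (lowerRows k D)

/-- The top `k + 1` rows of dots with their empty columns squeezed out. -/
def compressTop (k : ℕ) (D : Finset (ℕ × ℕ)) : Finset (ℕ × ℕ) :=
  (topRows k D).image (Prod.map id (Nat.count (· ∈ topCols k D)))

noncomputable def cut (k : ℕ) (FD : Finset (ℕ × ℕ) × Finset (ℕ × ℕ)) :
    (Finset (ℕ × ℕ) × Finset (ℕ × ℕ)) × Finset (ℕ × ℕ) :=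
  ((dropRows k FD.1, cutDots k FD.2), compressTop k FD.2)

section Cut

variable {k : ℕ} {F D : Finset (ℕ × ℕ)}

lemma mem_cutDots {p : ℕ × ℕ} :
    p ∈ cutDots k D ↔ (p.1 = 0 ∧ p.2 ∈ topCols k D) ∨ (0 < p.1 ∧ (p.1 + k, p.2) ∈ D) := by
  obtain ⟨x, y⟩ := p
  simp only [cutDots, mem_stack, mem_image, mem_lowerRows, Prod.mk.injEq, Prod.exists,
    add_zero]
  refine or_congr ⟨?_, ?_⟩ ⟨?_, ?_⟩
  · rintro ⟨c, hc, rfl, rfl⟩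
    exact ⟨rfl, hc⟩
  · rintro ⟨rfl, hy⟩
    exact ⟨y, hy, rfl, rfl⟩
  · rintro ⟨a, b, ⟨h, ha⟩, rfl, rfl⟩
    exact ⟨ha, h⟩
  · rintro ⟨hx, h⟩
    exact ⟨x, y, ⟨h, hx⟩, rfl, rfl⟩

lemma topCols_zero_cutDots : topCols 0 (cutDots k D) = topCols k D := by
  rw [topCols, cutDots, topRows_stack (fst_le_of_mem_image_mk_zero _)
    (fst_pos_of_mem_lowerRows k D), image_snd_image_mk_zero]

lemma lowerRows_zero_cutDots : lowerRows 0 (cutDots k D) = lowerRows k D :=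
  lowerRows_stack (fst_le_of_mem_image_mk_zero _) (fst_pos_of_mem_lowerRows k D)

lemma image_fst_compressTop : (compressTop k D).image Prod.fst = (topRows k D).image Prod.fst :=
  image_fst_image_prodMap_id _ _

lemma image_snd_compressTop : (compressTop k D).image Prod.snd = range #(topCols k D) := by
  rw [compressTop, image_snd_image_prodMap_id, ← topCols, image_count_mem]

lemma zero_mem_topCols (h00 : (0, 0) ∈ D) : 0 ∈ topCols k D :=
  mem_topCols.2 ⟨0, Nat.zero_le _, h00⟩

lemma image_fst_topRows (hFD : IsTLT F D) (hF : ∀ x ≤ k, ∀ y, (x, y) ∈ F ↔ (0, y) ∈ F) :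
    (topRows k D).image Prod.fst = range (k + 1) := by
  obtain ⟨-, hDF, h00, -, hrows, -⟩ := hFD
  ext x
  simp only [mem_image, mem_topRows, mem_range]
  refine ⟨fun ⟨p, ⟨_, hp⟩, hpx⟩ => by omega, fun hx => ?_⟩
  obtain ⟨y, hy⟩ := hrows x ⟨0, (hF x (by omega) 0).2 (hDF h00)⟩
  exact ⟨(x, y), ⟨hy, by omega⟩, rfl⟩

lemma isTLT_cutDots (hFD : IsTLT F D) (hF : ∀ x ≤ k, ∀ y, (x, y) ∈ F ↔ (0, y) ∈ F) :
    IsTLT (dropRows k F) (cutDots k D) := by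
  obtain ⟨hYoung, hDF, h00, htree, hrows, hcols⟩ := hFD
  refine ⟨hYoung.dropRows k, fun ⟨x, y⟩ h => ?_, mem_cutDots.2 (Or.inl ⟨rfl, zero_mem_topCols h00⟩),
    ?_, fun x ⟨y, hy⟩ => ?_, fun y ⟨x, hx⟩ => ?_⟩
  · rw [mem_dropRows]
    rcases mem_cutDots.1 h with ⟨rfl, hy⟩ | ⟨-, h⟩
    · obtain ⟨x, hx, hxy⟩ := mem_topCols.1 hy
      rw [zero_add, hF k le_rfl, ← hF x hx]
      exact hDF hxy
    · exact hDF h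
  · have := ((isTreeLike_iff_topRows_lowerRows k D).1 htree).2
    change IsTreeLike (cutDots k D)
    rw [cutDots, isTreeLike_stack_iff (fst_le_of_mem_image_mk_zero _)
      (fst_pos_of_mem_lowerRows k D), image_snd_image_mk_zero]
    exact ⟨isTreeLike_image_mk_zero (zero_mem_topCols h00), this⟩
  · rcases Nat.eq_zero_or_pos x with rfl | hx
    · exact ⟨0, mem_cutDots.2 (Or.inl ⟨rfl, zero_mem_topCols h00⟩)⟩
    · obtain ⟨y', hy'⟩ := hrows (x + k) ⟨y, mem_dropRows.1 hy⟩
      exact ⟨y', mem_cutDots.2 (Or.inr ⟨hx, hy'⟩)⟩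
  · obtain ⟨x', hx'⟩ := hcols y ⟨x + k, mem_dropRows.1 hx⟩
    by_cases hk : x' ≤ k
    · exact ⟨0, mem_cutDots.2 (Or.inl ⟨rfl, mem_topCols.2 ⟨x', hk, hx'⟩⟩)⟩
    · refine ⟨x' - k, mem_cutDots.2 (Or.inr ⟨by omega, ?_⟩)⟩
      rwa [Nat.sub_add_cancel (by omega)]

lemma card_cutDots_add (hFD : IsTLT F D) (hF : ∀ x ≤ k, ∀ y, (x, y) ∈ F ↔ (0, y) ∈ F) :
    #(cutDots k D) + k = #D := by
  have htop := ((isTreeLike_iff_topRows_lowerRows k D).1 hFD.2.2.2.1).1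
  have htop_card : #(topRows k D) + 1 = k + 1 + #(topCols k D) := by
    have := htop.card_add_one (mem_topRows.2 ⟨hFD.2.2.1, Nat.zero_le _⟩)
    rwa [image_fst_topRows hFD hF, card_range] at this
  have hD : #D = #(topRows k D) + #(lowerRows k D) := by
    conv_lhs => rw [← stack_topRows_lowerRows k D]
    exact card_stack (fst_le_of_mem_topRows k D) (fst_pos_of_mem_lowerRows k D)
  have hcut : #(cutDots k D) = #(topCols k D) + #(lowerRows k D) := by
    rw [cutDots, card_stack (fst_le_of_mem_image_mk_zero _) (fst_pos_of_mem_lowerRows k D),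
      card_image_of_injective _ (Prod.mk_right_injective 0)]
  omega

lemma isNAT_compressTop (hFD : IsTLT F D) (hF : ∀ x ≤ k, ∀ y, (x, y) ∈ F ↔ (0, y) ∈ F) :
    IsNAT (compressTop k D) := by
  have h00 : (0, 0) ∈ topRows k D := mem_topRows.2 ⟨hFD.2.2.1, Nat.zero_le _⟩
  have htop := ((isTreeLike_iff_topRows_lowerRows k D).1 hFD.2.2.2.1).1
  rw [isNAT_iff, image_fst_compressTop, image_snd_compressTop, image_fst_topRows hFD hF,
    card_range, card_range]
  refine ⟨mem_image.2 ⟨(0, 0), h00, by simp⟩, ?_, rfl, rfl⟩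
  exact htop.image_prodMap (strictMonoOn_count_mem _)
    (fun p hp => mem_coe.2 (mem_image_of_mem _ hp)) (Nat.count_zero _)

lemma card_filter_cutDots :
    #((cutDots k D).filter (·.1 = 0)) = #((compressTop k D).image Prod.snd) := by
  rw [filter_fst_eq_zero_eq_topRows, cutDots, topRows_stack (fst_le_of_mem_image_mk_zero _)
    (fst_pos_of_mem_lowerRows k D), card_image_of_injective _ (Prod.mk_right_injective 0),
    image_snd_compressTop, card_range]

end Cut

noncomputable def expandCols (S : Finset ℕ) (a : Finset (ℕ × ℕ)) : Finset (ℕ × ℕ) :=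
  a.image (Prod.map id (Nat.nth (· ∈ S)))

section ExpandCols

variable {S : Finset ℕ} {a : Finset (ℕ × ℕ)}

lemma snd_lt_card_of_image_snd_eq_range (hcols : a.image Prod.snd = range #S) {q : ℕ × ℕ}
    (hq : q ∈ a) : q.2 < #S :=
  mem_range.1 (hcols ▸ mem_image_of_mem _ hq)

lemma snd_mem_of_mem_expandCols (hcols : a.image Prod.snd = range #S) {p : ℕ × ℕ}
    (hp : p ∈ expandCols S a) : p.2 ∈ S := by
  obtain ⟨q, hq, rfl⟩ := mem_image.1 hp
  exact nth_mem_of_lt_card S (snd_lt_card_of_image_snd_eq_range hcols hq)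

lemma image_snd_expandCols (hcols : a.image Prod.snd = range #S) :
    (expandCols S a).image Prod.snd = S := by
  rw [expandCols, image_snd_image_prodMap_id, hcols, image_nth_mem_range]

lemma card_expandCols (hcols : a.image Prod.snd = range #S) : #(expandCols S a) = #a := by
  refine card_image_of_injOn fun p hp q hq hpq => ?_
  simp only [Prod.map, id, Prod.mk.injEq] at hpq
  exact Prod.ext hpq.1 <| (strictMonoOn_nth_mem S).injOn
    (snd_lt_card_of_image_snd_eq_range hcols hp) (snd_lt_card_of_image_snd_eq_range hcols hq) hpq.2

lemma IsTreeLike.expandCols (ha : IsTreeLike a) (hcols : a.image Prod.snd = range #S)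
    (hS : 0 ∈ S) : IsTreeLike (expandCols S a) :=
  ha.image_prodMap (strictMonoOn_nth_mem S)
    (fun _ hp => snd_lt_card_of_image_snd_eq_range hcols hp) (Nat.nth_zero_of_zero hS)

lemma image_count_expandCols (hcols : a.image Prod.snd = range #S) :
    (expandCols S a).image (Prod.map id (Nat.count (· ∈ S))) = a := by
  rw [expandCols, image_image]
  refine (image_congr fun q hq => ?_).trans image_id
  change (q.1, Nat.count (· ∈ S) (Nat.nth (· ∈ S) q.2)) = q
  rw [count_nth_mem S (snd_lt_card_of_image_snd_eq_range hcols hq)]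

lemma fst_le_of_mem_expandCols {k : ℕ} (hrows : a.image Prod.fst = range (k + 1)) :
    ∀ p ∈ expandCols S a, p.1 ≤ k := by
  intro p hp
  obtain ⟨q, hq, rfl⟩ := mem_image.1 hp
  have : q.1 ∈ range (k + 1) := hrows ▸ mem_image_of_mem Prod.fst hq
  exact Nat.le_of_lt_succ (mem_range.1 this)

end ExpandCols

lemma expandCols_compressTop (k : ℕ) (D : Finset (ℕ × ℕ)) :
    expandCols (topCols k D) (compressTop k D) = topRows k D := by
  rw [expandCols, compressTop, image_image]
  refine (image_congr fun p hp => ?_).trans image_id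
  have hp2 : p.2 ∈ topCols k D := mem_image_of_mem Prod.snd hp
  change (p.1, Nat.nth (· ∈ topCols k D) (Nat.count (· ∈ topCols k D) p.2)) = p
  rw [Nat.nth_count hp2]

/-- The dots of the glued tableau: `a`, with its columns spread onto the dotted columns of
row `0` of `E`, replaces that row. -/
noncomputable def glueDots (k : ℕ) (E a : Finset (ℕ × ℕ)) : Finset (ℕ × ℕ) :=
  stack k (expandCols (topCols 0 E) a) (lowerRows 0 E)

noncomputable def glue (k : ℕ) (ba : (Finset (ℕ × ℕ) × Finset (ℕ × ℕ)) × Finset (ℕ × ℕ)) :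
    Finset (ℕ × ℕ) × Finset (ℕ × ℕ) :=
  (stretchRows k ba.1.1, glueDots k ba.1.2 ba.2)

section Glue

variable {k : ℕ} {G E a : Finset (ℕ × ℕ)}

lemma topRows_glueDots (hrows : a.image Prod.fst = range (k + 1)) :
    topRows k (glueDots k E a) = expandCols (topCols 0 E) a :=
  topRows_stack (fst_le_of_mem_expandCols hrows) (fst_pos_of_mem_lowerRows 0 E)

lemma lowerRows_glueDots (hrows : a.image Prod.fst = range (k + 1)) :
    lowerRows k (glueDots k E a) = lowerRows 0 E :=
  lowerRows_stack (fst_le_of_mem_expandCols hrows) (fst_pos_of_mem_lowerRows 0 E)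

lemma topCols_glueDots (hrows : a.image Prod.fst = range (k + 1))
    (hcols : a.image Prod.snd = range #(topCols 0 E)) :
    topCols k (glueDots k E a) = topCols 0 E := by
  rw [topCols, topRows_glueDots hrows, image_snd_expandCols hcols]

lemma card_glueDots (ha0 : (0, 0) ∈ a) (ha : IsTreeLike a)
    (hrows : a.image Prod.fst = range (k + 1)) (hcols : a.image Prod.snd = range #(topCols 0 E)) :
    #(glueDots k E a) = #E + k := by
  have hE : #E = #(topRows 0 E) + #(lowerRows 0 E) := by
    conv_lhs => rw [← stack_topRows_lowerRows 0 E]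
    exact card_stack (fst_le_of_mem_topRows 0 E) (fst_pos_of_mem_lowerRows 0 E)
  have hglue : #(glueDots k E a) = #a + #(lowerRows 0 E) := by
    rw [glueDots, card_stack (fst_le_of_mem_expandCols hrows) (fst_pos_of_mem_lowerRows 0 E),
      card_expandCols hcols]
  have ha_card := ha.card_add_one ha0
  rw [hrows, hcols, card_range, card_range] at ha_card
  have := card_topCols_zero E
  omega

lemma glueDots_subset_stretchRows (hEG : E ⊆ G) (hrows : a.image Prod.fst = range (k + 1))
    (hcols : a.image Prod.snd = range #(topCols 0 E)) : glueDots k E a ⊆ stretchRows k G := by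
  intro p hp
  rw [mem_stretchRows]
  rcases mem_stack.1 hp with hp | ⟨q, hq, rfl⟩
  · rw [Nat.sub_eq_zero_of_le (fst_le_of_mem_expandCols hrows p hp)]
    exact hEG (mem_topCols_zero.1 (snd_mem_of_mem_expandCols hcols hp))
  · simpa using hEG (mem_lowerRows.1 hq).1

lemma isTLT_glueDots (hGE : IsTLT G E) (ha0 : (0, 0) ∈ a) (ha : IsTreeLike a)
    (hrows : a.image Prod.fst = range (k + 1)) (hcols : a.image Prod.snd = range #(topCols 0 E)) :
    IsTLT (stretchRows k G) (glueDots k E a) := by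
  obtain ⟨hYoung, hEG, h00, htree, hrowcov, hcolcov⟩ := hGE
  have hS : 0 ∈ topCols 0 E := mem_topCols_zero.2 h00
  have hexp := fst_le_of_mem_expandCols (S := topCols 0 E) hrows
  refine ⟨hYoung.stretchRows k, glueDots_subset_stretchRows hEG hrows hcols, ?_, ?_,
    fun x ⟨y, hy⟩ => ?_, fun y ⟨x, hx⟩ => ?_⟩
  · exact mem_stack.2 (Or.inl (mem_image.2 ⟨(0, 0), ha0, by simp [Nat.nth_zero_of_zero hS]⟩))
  · change IsTreeLike (glueDots k E a)
    rw [glueDots, isTreeLike_stack_iff hexp (fst_pos_of_mem_lowerRows 0 E),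
      image_snd_expandCols hcols]
    exact ⟨ha.expandCols hcols hS, ((isTreeLike_iff_topRows_lowerRows 0 E).1 htree).2⟩
  · rw [mem_stretchRows] at hy
    by_cases hx : x ≤ k
    · obtain ⟨q, hq, rfl⟩ := mem_image.1 (hrows ▸ mem_range.2 (Nat.lt_succ_of_le hx) :
        x ∈ a.image Prod.fst)
      exact ⟨Nat.nth _ q.2, mem_stack.2 (Or.inl (mem_image_of_mem _ hq))⟩
    · obtain ⟨y', hy'⟩ := hrowcov (x - k) ⟨y, hy⟩
      refine ⟨y', mem_stack.2 (Or.inr ⟨(x - k, y'), mem_lowerRows.2 ⟨hy', by omega⟩, ?_⟩)⟩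
      simp only [Prod.mk.injEq, and_true]
      omega
  · rw [mem_stretchRows] at hx
    obtain ⟨x', hx'⟩ := hcolcov y ⟨x - k, hx⟩
    rcases Nat.eq_zero_or_pos x' with rfl | hpos
    · have hyS : y ∈ topCols 0 E := mem_topCols_zero.2 hx'
      obtain ⟨q, hq, hqy⟩ := mem_image.1 (hcols ▸ mem_range.2 (count_mem_lt_card _ hyS) :
        Nat.count (· ∈ topCols 0 E) y ∈ a.image Prod.snd)
      refine ⟨q.1, mem_stack.2 (Or.inl (mem_image.2 ⟨q, hq, ?_⟩))⟩
      change (q.1, Nat.nth _ q.2) = (q.1, y)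
      rw [hqy, Nat.nth_count hyS]
    · refine ⟨x' + k, mem_stack.2 (Or.inr ⟨(x', y), mem_lowerRows.2 ⟨?_, hpos⟩, rfl⟩)⟩
      rwa [add_zero]

end Glue

lemma glue_cut {k : ℕ} {F D : Finset (ℕ × ℕ)} (hF : ∀ x ≤ k, ∀ y, (x, y) ∈ F ↔ (0, y) ∈ F) :
    glue k (cut k (F, D)) = (F, D) := by
  rw [glue, cut, stretchRows_dropRows hF, glueDots, topCols_zero_cutDots, lowerRows_zero_cutDots,
    expandCols_compressTop, stack_topRows_lowerRows]

lemma cut_glue {k : ℕ} {G E a : Finset (ℕ × ℕ)} (hrows : a.image Prod.fst = range (k + 1))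
    (hcols : a.image Prod.snd = range #(topCols 0 E)) :
    cut k (glue k ((G, E), a)) = ((G, E), a) := by
  rw [glue, cut, dropRows_stretchRows, cutDots, compressTop, topCols_glueDots hrows hcols,
    lowerRows_glueDots hrows, topRows_glueDots hrows, image_mk_zero_topCols_zero,
    stack_topRows_lowerRows, image_count_expandCols hcols]

lemma image_snd_eq_range_topCols {E a : Finset (ℕ × ℕ)} (ha : IsNAT a)
    (hcard : #(E.filter (·.1 = 0)) = #(a.image Prod.snd)) :
    a.image Prod.snd = range #(topCols 0 E) := by
  rw [card_topCols_zero, ← filter_fst_eq_zero_eq_topRows, hcard]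
  exact (isNAT_iff.1 ha).2.2.2

theorem tlt_cut_bijection_general (n l : ℕ) (hl : 1 ≤ l) :
    Set.ncard {FD : Finset (ℕ × ℕ) × Finset (ℕ × ℕ) |
        IsTLT FD.1 FD.2 ∧ FD.2.card = n + l - 1 ∧
        (∀ x < l, 0 < rowLen FD.1 x) ∧
        (∀ x < l, rowLen FD.1 x = rowLen FD.1 0)} =
      Set.ncard {ba : (Finset (ℕ × ℕ) × Finset (ℕ × ℕ)) × Finset (ℕ × ℕ) |
        IsTLT ba.1.1 ba.1.2 ∧ ba.1.2.card = n ∧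
        IsNAT ba.2 ∧ ba.2.image Prod.fst = Finset.range l ∧
        (ba.1.2.filter (fun p => p.1 = 0)).card = (ba.2.image Prod.snd).card} := by
  obtain ⟨k, rfl⟩ : ∃ k, l = k + 1 := ⟨l - 1, by omega⟩
  have hrect {F : Finset (ℕ × ℕ)} (hF : IsYoungDiagram F) (h : ∀ x < k + 1, rowLen F x = rowLen F 0)
      (x : ℕ) (hx : x ≤ k) : ∀ y, (x, y) ∈ F ↔ (0, y) ∈ F :=
    (rowLen_eq_rowLen_iff hF).1 (h x (Nat.lt_succ_of_le hx))
  refine Set.BijOn.ncard_eq (Set.InvOn.bijOn (f := cut k) (f' := glue k) ⟨?_, ?_⟩ ?_ ?_)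
  · rintro ⟨F, D⟩ ⟨hFD, -, -, hrow⟩
    exact glue_cut (hrect hFD.1 hrow)
  · rintro ⟨⟨G, E⟩, a⟩ ⟨-, -, ha, hrows, hcard⟩
    exact cut_glue hrows (image_snd_eq_range_topCols ha hcard)
  · rintro ⟨F, D⟩ ⟨hFD, hcard, -, hrow⟩
    dsimp only at hFD hcard hrow
    have hF := hrect hFD.1 hrow
    refine ⟨isTLT_cutDots hFD hF, ?_, isNAT_compressTop hFD hF,
      image_fst_compressTop.trans (image_fst_topRows hFD hF), card_filter_cutDots⟩
    change #(cutDots k D) = n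
    have := card_cutDots_add hFD hF
    omega
  · rintro ⟨⟨G, E⟩, a⟩ ⟨hGE, hcard, ha, hrows, hcard0⟩
    dsimp only at hGE hcard ha hrows hcard0
    have hcols := image_snd_eq_range_topCols ha hcard0
    obtain ⟨ha0, hatree, -⟩ := isNAT_iff.1 ha
    refine ⟨isTLT_glueDots hGE ha0 hatree hrows hcols, ?_,
      fun x hx => rowLen_stretchRows_pos hGE.1 (hGE.2.1 hGE.2.2.1) (Nat.le_of_lt_succ hx),
      fun x hx => rowLen_stretchRows_eq hGE.1 (Nat.le_of_lt_succ hx)⟩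
    change #(glueDots k E a) = n + (k + 1) - 1
    rw [card_glueDots ha0 hatree hrows hcols]
    omega

theorem tlt_cut_bijection (n l : ℕ) (hn : 1 ≤ n) (hl : 1 ≤ l) :
    Set.ncard {FD : Finset (ℕ × ℕ) × Finset (ℕ × ℕ) |
        IsTLT FD.1 FD.2 ∧ FD.2.card = n + l - 1 ∧
        (∀ x < l, 0 < rowLen FD.1 x) ∧
        (∀ x < l, rowLen FD.1 x = rowLen FD.1 0)} =
      Set.ncard {ba : (Finset (ℕ × ℕ) × Finset (ℕ × ℕ)) × Finset (ℕ × ℕ) |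
        IsTLT ba.1.1 ba.1.2 ∧ ba.1.2.card = n ∧
        IsNAT ba.2 ∧ ba.2.image Prod.fst = Finset.range l ∧
        (ba.1.2.filter (fun p => p.1 = 0)).card = (ba.2.image Prod.snd).card} :=
  tlt_cut_bijection_general n l hl
end TreeLike
end

section
/- For every non-ambiguous tree A, the map p ↦ p.1 restricts to a bijection from V_L onto {1, 2, …, |V_L|} (in particular |V_L| = max{p.1 : p ∈ A}), and symmetrically the map p ↦ p.2 restricts to a bijection from V_R onto {1, 2, …, |V_R|}. -/
/-- The set of left children of a non-ambiguous tree. -/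
def VL (A : Finset (ℕ × ℕ)) : Set (ℕ × ℕ) :=
  {p | p ∈ A ∧ p ≠ (0, 0) ∧ ∃ r ∈ A, r.2 = p.2 ∧ r.1 < p.1}

/-- The set of right children of a non-ambiguous tree. -/
def VR (A : Finset (ℕ × ℕ)) : Set (ℕ × ℕ) :=
  {p | p ∈ A ∧ p ≠ (0, 0) ∧ ∃ q ∈ A, q.1 = p.1 ∧ q.2 < p.2}

/-- A finite set of positive naturals that is downward closed (above 1)
equals `Icc 1 n` where `n` is its cardinality. -/
lemma icc_of_dc (S : Set ℕ) (hfin : S.Finite) (h1 : ∀ x ∈ S, 1 ≤ x)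
    (hdc : ∀ x ∈ S, ∀ y, 1 ≤ y → y ≤ x → y ∈ S) :
    S = Set.Icc 1 S.ncard := by
  rcases S.eq_empty_or_nonempty with hS | hS
  · simp [hS]
  · have hT : hfin.toFinset.Nonempty := by
      rwa [Set.Finite.toFinset_nonempty]
    set m := hfin.toFinset.max' hT with hm
    have hmS : m ∈ S := by
      have := hfin.toFinset.max'_mem hT
      rwa [Set.Finite.mem_toFinset] at this
    have hSI : S = Set.Icc 1 m := by
      ext x
      constructor
      · intro hx
        refine ⟨h1 x hx, ?_⟩
        exact hfin.toFinset.le_max' x (hfin.mem_toFinset.mpr hx)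
      · rintro ⟨h1x, hxm⟩
        exact hdc m hmS x h1x hxm
    have hcard : S.ncard = m := by
      rw [hSI, ← Finset.coe_Icc, Set.ncard_coe_finset, Nat.card_Icc]
      omega
    rw [hcard, ← hSI]

lemma half_L (A : Finset (ℕ × ℕ)) (hA : IsNAT A) :
    Set.BijOn Prod.fst (VL A) (Set.Icc 1 (VL A).ncard) := by
  obtain ⟨-, hxor, hcompl⟩ := hA
  have hinj : Set.InjOn Prod.fst (VL A) := by
    rintro p ⟨hpA, hp0, hpL⟩ p' ⟨hp'A, hp'0, hp'L⟩ h
    by_contra hne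
    have hsnd : p.2 ≠ p'.2 := fun h2 => hne (Prod.ext h h2)
    rcases Nat.lt_or_ge p.2 p'.2 with hlt | hge
    · rcases hxor p' hp'A hp'0 with ⟨-, hnl⟩ | ⟨-, hnr⟩
      · exact hnl hp'L
      · exact hnr ⟨p, hpA, h, hlt⟩
    · have hlt : p'.2 < p.2 := lt_of_le_of_ne hge (fun h2 => hsnd h2.symm)
      rcases hxor p hpA hp0 with ⟨-, hnl⟩ | ⟨-, hnr⟩
      · exact hnl hpL
      · exact hnr ⟨p', hp'A, h.symm, hlt⟩
  have hVLfin : (VL A).Finite := A.finite_toSet.subset (fun p hp => hp.1)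
  have hSfin : (Prod.fst '' VL A).Finite := hVLfin.image _
  have h1 : ∀ x ∈ Prod.fst '' VL A, 1 ≤ x := by
    rintro x ⟨p, ⟨-, -, r, -, -, hr⟩, rfl⟩
    omega
  have hdc : ∀ x ∈ Prod.fst '' VL A, ∀ y, 1 ≤ y → y ≤ x → y ∈ Prod.fst '' VL A := by
    rintro x ⟨p, hp, rfl⟩ y h1y hyx
    -- there is a point with first coordinate y
    have hex : ∃ q ∈ A, q.1 = y := by
      rcases eq_or_lt_of_le hyx with heq | hlt
      · exact ⟨p, hp.1, heq.symm⟩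
      · exact (hcompl p hp.1).1 y hlt
    -- take the one with minimal second coordinate
    have hTne : (A.filter (fun q => q.1 = y)).Nonempty := by
      obtain ⟨q, hqA, hqy⟩ := hex
      exact ⟨q, Finset.mem_filter.mpr ⟨hqA, hqy⟩⟩
    obtain ⟨q, hqT, hqmin⟩ := Finset.exists_min_image _ Prod.snd hTne
    obtain ⟨hqA, hqy⟩ := Finset.mem_filter.mp hqT
    have hq0 : q ≠ (0, 0) := by
      intro h; rw [h] at hqy; simp at hqy; omega
    have hnr : ¬ ∃ q' ∈ A, q'.1 = q.1 ∧ q'.2 < q.2 := by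
      rintro ⟨q', hq'A, hq'1, hq'2⟩
      have : q.2 ≤ q'.2 := hqmin q' (Finset.mem_filter.mpr ⟨hq'A, by omega⟩)
      omega
    rcases hxor q hqA hq0 with ⟨hr, -⟩ | ⟨hl, -⟩
    · exact absurd hr hnr
    · exact ⟨q, ⟨hqA, hq0, hl⟩, hqy⟩
  have himg : Prod.fst '' VL A = Set.Icc 1 (VL A).ncard := by
    have := icc_of_dc _ hSfin h1 hdc
    rwa [Set.ncard_image_of_injOn hinj] at this
  exact himg ▸ hinj.bijOn_image

lemma half_R (A : Finset (ℕ × ℕ)) (hA : IsNAT A) :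
    Set.BijOn Prod.snd (VR A) (Set.Icc 1 (VR A).ncard) := by
  obtain ⟨-, hxor, hcompl⟩ := hA
  have hinj : Set.InjOn Prod.snd (VR A) := by
    rintro p ⟨hpA, hp0, hpR⟩ p' ⟨hp'A, hp'0, hp'R⟩ h
    by_contra hne
    have hfst : p.1 ≠ p'.1 := fun h1 => hne (Prod.ext h1 h)
    rcases Nat.lt_or_ge p.1 p'.1 with hlt | hge
    · rcases hxor p' hp'A hp'0 with ⟨-, hnl⟩ | ⟨-, hnr⟩
      · exact hnl ⟨p, hpA, h, hlt⟩
      · exact hnr hp'R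
    · have hlt : p'.1 < p.1 := lt_of_le_of_ne hge (fun h1 => hfst h1.symm)
      rcases hxor p hpA hp0 with ⟨-, hnl⟩ | ⟨-, hnr⟩
      · exact hnl ⟨p', hp'A, h.symm, hlt⟩
      · exact hnr hpR
  have hVRfin : (VR A).Finite := A.finite_toSet.subset (fun p hp => hp.1)
  have hSfin : (Prod.snd '' VR A).Finite := hVRfin.image _
  have h1 : ∀ y ∈ Prod.snd '' VR A, 1 ≤ y := by
    rintro y ⟨p, ⟨-, -, q, -, -, hq⟩, rfl⟩
    omega
  have hdc : ∀ x ∈ Prod.snd '' VR A, ∀ y, 1 ≤ y → y ≤ x → y ∈ Prod.snd '' VR A := by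
    rintro x ⟨p, hp, rfl⟩ y h1y hyx
    have hex : ∃ q ∈ A, q.2 = y := by
      rcases eq_or_lt_of_le hyx with heq | hlt
      · exact ⟨p, hp.1, heq.symm⟩
      · exact (hcompl p hp.1).2 y hlt
    have hTne : (A.filter (fun q => q.2 = y)).Nonempty := by
      obtain ⟨q, hqA, hqy⟩ := hex
      exact ⟨q, Finset.mem_filter.mpr ⟨hqA, hqy⟩⟩
    obtain ⟨q, hqT, hqmin⟩ := Finset.exists_min_image _ Prod.fst hTne
    obtain ⟨hqA, hqy⟩ := Finset.mem_filter.mp hqT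
    have hq0 : q ≠ (0, 0) := by
      intro h; rw [h] at hqy; simp at hqy; omega
    have hnl : ¬ ∃ q' ∈ A, q'.2 = q.2 ∧ q'.1 < q.1 := by
      rintro ⟨q', hq'A, hq'2, hq'1⟩
      have : q.1 ≤ q'.1 := hqmin q' (Finset.mem_filter.mpr ⟨hq'A, by omega⟩)
      omega
    rcases hxor q hqA hq0 with ⟨hr, -⟩ | ⟨hl, -⟩
    · exact ⟨q, ⟨hqA, hq0, hr⟩, hqy⟩
    · exact absurd hl hnl
  have himg : Prod.snd '' VR A = Set.Icc 1 (VR A).ncard := by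
    have := icc_of_dc _ hSfin h1 hdc
    rwa [Set.ncard_image_of_injOn hinj] at this
  exact himg ▸ hinj.bijOn_image

theorem vl_vr_bijections (A : Finset (ℕ × ℕ)) (hA : IsNAT A) :
    Set.BijOn Prod.fst (VL A) (Set.Icc 1 (VL A).ncard) ∧
    Set.BijOn Prod.snd (VR A) (Set.Icc 1 (VR A).ncard) := by
  exact ⟨half_L A hA, half_R A hA⟩
end

section
/- For every non-ambiguous tree A, the number of non-ambiguous trees isomorphic to A equals e_L(A)·e_R(A), where e_L(A) is the number of bijections f : V_L → {1, …, |V_L|} such that f(u) < f(v) whenever u, v ∈ V_L, u ≠ v and u is an ancestor of v in A, and e_R(A) is defined in the same way with V_R in place of V_L. -/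
/-- `q` is the parent of `p`, with `p` a left child, in the non-ambiguous tree `A`. -/
def LeftParent (A : Finset (ℕ × ℕ)) (p q : ℕ × ℕ) : Prop :=
  p ∈ A ∧ q ∈ A ∧ q.2 = p.2 ∧ q.1 < p.1 ∧
    ∀ r ∈ A, r.2 = p.2 → r.1 < p.1 → r.1 ≤ q.1

/-- `q` is the parent of `p`, with `p` a right child, in the non-ambiguous tree `A`. -/
def RightParent (A : Finset (ℕ × ℕ)) (p q : ℕ × ℕ) : Prop :=
  p ∈ A ∧ q ∈ A ∧ q.1 = p.1 ∧ q.2 < p.2 ∧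
    ∀ r ∈ A, r.1 = p.1 → r.2 < p.2 → r.2 ≤ q.2

/-- `u` is an ancestor of `v` in `A` (reflexive-transitive closure of the
parent-to-child relation). -/
def Ancestor (A : Finset (ℕ × ℕ)) (u v : ℕ × ℕ) : Prop :=
  Relation.ReflTransGen (fun x y => LeftParent A y x ∨ RightParent A y x) u v

/-- Two non-ambiguous trees are isomorphic (have the same underlying binary tree). -/
def NATIso (A A' : Finset (ℕ × ℕ)) : Prop :=
  ∃ f : ℕ × ℕ → ℕ × ℕ, Set.BijOn f (↑A) (↑A') ∧ f (0, 0) = (0, 0) ∧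
    ∀ p ∈ A, ∀ q ∈ A,
      (LeftParent A p q ↔ LeftParent A' (f p) (f q)) ∧
      (RightParent A p q ↔ RightParent A' (f p) (f q))

/-- The number of non-ambiguous trees isomorphic to `A`. -/
noncomputable def NATcount (A : Finset (ℕ × ℕ)) : ℕ :=
  Set.ncard {A' : Finset (ℕ × ℕ) | IsNAT A' ∧ NATIso A A'}

/-- The number of linear extensions of the ancestor poset on the left children of `A`. -/
noncomputable def eL (A : Finset (ℕ × ℕ)) : ℕ :=
  Set.ncard {f : ↥(VL A) → ℕ | Function.Injective f ∧
    Set.range f = Set.Icc 1 (VL A).ncard ∧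
    ∀ u v : ↥(VL A), (u : ℕ × ℕ) ≠ (v : ℕ × ℕ) → Ancestor A u v → f u < f v}

/-- The number of linear extensions of the ancestor poset on the right children of `A`. -/
noncomputable def eR (A : Finset (ℕ × ℕ)) : ℕ :=
  Set.ncard {f : ↥(VR A) → ℕ | Function.Injective f ∧
    Set.range f = Set.Icc 1 (VR A).ncard ∧
    ∀ u v : ↥(VR A), (u : ℕ × ℕ) ≠ (v : ℕ × ℕ) → Ancestor A u v → f u < f v}

/-- Left and right children are treated at once by naming the coordinates: along the axis
`(π, π') = (fst, snd)`, `ParentAlong` is `LeftParent` and `Children` is `VL`; along `(snd, fst)`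
they are `RightParent` and `VR` (all definitionally). Lines are the level sets of `π'`. -/
def IsAxis (π π' : ℕ × ℕ → ℕ) : Prop :=
  (π = Prod.fst ∧ π' = Prod.snd) ∨ (π = Prod.snd ∧ π' = Prod.fst)

def HasPredAlong (π π' : ℕ × ℕ → ℕ) (A : Finset (ℕ × ℕ)) (p : ℕ × ℕ) : Prop :=
  ∃ r ∈ A, π' r = π' p ∧ π r < π p

def ParentAlong (π π' : ℕ × ℕ → ℕ) (A : Finset (ℕ × ℕ)) (p q : ℕ × ℕ) : Prop :=
  p ∈ A ∧ q ∈ A ∧ π' q = π' p ∧ π q < π p ∧ ∀ r ∈ A, π' r = π' p → π r < π p → π r ≤ π q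

def Children (π π' : ℕ × ℕ → ℕ) (A : Finset (ℕ × ℕ)) : Set (ℕ × ℕ) :=
  {p | p ∈ A ∧ p ≠ (0, 0) ∧ HasPredAlong π π' A p}

section

variable {A A' : Finset (ℕ × ℕ)} {π π' : ℕ × ℕ → ℕ} {p q u v w : ℕ × ℕ}

namespace IsAxis

lemma fst_snd : IsAxis Prod.fst Prod.snd := Or.inl ⟨rfl, rfl⟩

lemma snd_fst : IsAxis Prod.snd Prod.fst := Or.inr ⟨rfl, rfl⟩

lemma symm (hπ : IsAxis π π') : IsAxis π' π := by
  rcases hπ with ⟨rfl, rfl⟩ | ⟨rfl, rfl⟩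
  exacts [snd_fst, fst_snd]

lemma ext (hπ : IsAxis π π') (h : π p = π q) (h' : π' p = π' q) : p = q := by
  rcases hπ with ⟨rfl, rfl⟩ | ⟨rfl, rfl⟩
  exacts [Prod.ext h h', Prod.ext h' h]

lemma apply_zero (hπ : IsAxis π π') : π (0, 0) = 0 := by
  rcases hπ with ⟨rfl, rfl⟩ | ⟨rfl, rfl⟩ <;> rfl

lemma monotone (hπ : IsAxis π π') : Monotone π := by
  rcases hπ with ⟨rfl, rfl⟩ | ⟨rfl, rfl⟩
  exacts [fun _ _ h => h.1, fun _ _ h => h.2]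

lemma lt_of_eq_of_lt (hπ : IsAxis π π') (h' : π' q = π' p) (h : π q < π p) : q < p := by
  rcases hπ with ⟨rfl, rfl⟩ | ⟨rfl, rfl⟩
  · exact Prod.lt_iff.2 (Or.inl ⟨h, h'.le⟩)
  · exact Prod.lt_iff.2 (Or.inr ⟨h'.le, h⟩)

end IsAxis

lemma parent_iff_parentAlong (hπ : IsAxis π π') :
    (LeftParent A p q ∨ RightParent A p q) ↔ ParentAlong π π' A p q ∨ ParentAlong π' π A p q := by
  rcases hπ with ⟨rfl, rfl⟩ | ⟨rfl, rfl⟩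
  exacts [Iff.rfl, or_comm]

namespace IsNAT

lemma xor (hA : IsNAT A) (hπ : IsAxis π π') (hp : p ∈ A) (hne : p ≠ (0, 0)) :
    Xor (HasPredAlong π π' A p) (HasPredAlong π' π A p) := by
  rcases hπ with ⟨rfl, rfl⟩ | ⟨rfl, rfl⟩
  exacts [(hA.2.1 p hp hne).symm, hA.2.1 p hp hne]

lemma exists_apply_eq (hA : IsNAT A) (hπ : IsAxis π π') (hp : p ∈ A) {x : ℕ} (hx : x < π p) :
    ∃ q ∈ A, π q = x := by
  rcases hπ with ⟨rfl, rfl⟩ | ⟨rfl, rfl⟩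
  exacts [(hA.2.2 p hp).1 x hx, (hA.2.2 p hp).2 x hx]

end IsNAT

lemma mem_children_iff (hA : IsNAT A) (hπ : IsAxis π π') :
    p ∈ Children π π' A ↔ p ∈ A ∧ p ≠ (0, 0) ∧ ¬ HasPredAlong π' π A p := by
  refine ⟨fun ⟨hp, hne, h⟩ => ⟨hp, hne, fun h' => ?_⟩, fun ⟨hp, hne, h⟩ =>
    ⟨hp, hne, (hA.xor hπ hp hne).or.resolve_right h⟩⟩
  rcases hA.xor hπ hp hne with ⟨-, hn⟩ | ⟨-, hn⟩
  exacts [hn h', hn h]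

lemma exists_parentAlong (hp : p ∈ A) (h : HasPredAlong π π' A p) : ∃ q, ParentAlong π π' A p q := by
  classical
  obtain ⟨r, hr, hr'⟩ := h
  obtain ⟨q, hq, hmax⟩ := Finset.exists_max_image (A.filter fun r => π' r = π' p ∧ π r < π p) π
    ⟨r, Finset.mem_filter.2 ⟨hr, hr'⟩⟩
  rw [Finset.mem_filter] at hq
  exact ⟨q, hp, hq.1, hq.2.1, hq.2.2, fun s hs hs' hs'' => hmax s (Finset.mem_filter.2 ⟨hs, hs', hs''⟩)⟩

namespace ParentAlong

lemma hasPredAlong (h : ParentAlong π π' A p q) : HasPredAlong π π' A p :=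
  ⟨q, h.2.1, h.2.2.1, h.2.2.2.1⟩

lemma lt (hπ : IsAxis π π') (h : ParentAlong π π' A p q) : q < p :=
  hπ.lt_of_eq_of_lt h.2.2.1 h.2.2.2.1

lemma ne_zero (hπ : IsAxis π π') (h : ParentAlong π π' A p q) : p ≠ (0, 0) := by
  rintro rfl
  have := h.2.2.2.1
  rw [hπ.apply_zero] at this
  exact Nat.not_lt_zero _ this

lemma mem_children (hπ : IsAxis π π') (h : ParentAlong π π' A p q) : p ∈ Children π π' A :=
  ⟨h.1, h.ne_zero hπ, h.hasPredAlong⟩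

lemma unique (hπ : IsAxis π π') (h : ParentAlong π π' A p q) (h' : ParentAlong π π' A p w) :
    q = w :=
  hπ.ext (le_antisymm (h'.2.2.2.2 q h.2.1 h.2.2.1 h.2.2.2.1) (h.2.2.2.2 w h'.2.1 h'.2.2.1 h'.2.2.2.1))
    (h.2.2.1.trans h'.2.2.1.symm)

lemma child_unique (hπ : IsAxis π π') (h : ParentAlong π π' A p q) (h' : ParentAlong π π' A w q) :
    p = w := by
  have hline : π' p = π' w := h.2.2.1.symm.trans h'.2.2.1
  refine hπ.ext ?_ hline
  by_contra hne
  rcases Nat.lt_or_gt_of_ne hne with hlt | hlt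
  · exact absurd (h'.2.2.2.2 p h.1 hline hlt) (not_le.2 h.2.2.2.1)
  · exact absurd (h.2.2.2.2 w h'.1 hline.symm hlt) (not_le.2 h'.2.2.2.1)

end ParentAlong

lemma ParentAlong.not_parentAlong_symm (hA : IsNAT A) (hπ : IsAxis π π')
    (h : ParentAlong π π' A p q) (h' : ParentAlong π' π A p w) : False :=
  ((mem_children_iff hA hπ).1 (h.mem_children hπ)).2.2 h'.hasPredAlong

lemma parent_lt (h : LeftParent A p q ∨ RightParent A p q) : q < p := by
  rcases h with h | h
  exacts [ParentAlong.lt .fst_snd h, ParentAlong.lt .snd_fst h]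

lemma parent_unique (hA : IsNAT A) (h : LeftParent A p q ∨ RightParent A p q)
    (h' : LeftParent A p w ∨ RightParent A p w) : q = w := by
  rcases h with h | h <;> rcases h' with h' | h'
  exacts [ParentAlong.unique .fst_snd h h', (ParentAlong.not_parentAlong_symm hA .fst_snd h h').elim,
    (ParentAlong.not_parentAlong_symm hA .snd_fst h h').elim, ParentAlong.unique .snd_fst h h']

lemma ParentAlong.ancestor (hπ : IsAxis π π') (h : ParentAlong π π' A v u) : Ancestor A u v :=
  .single ((parent_iff_parentAlong hπ).2 (.inl h))

lemma Ancestor.le (h : Ancestor A u v) : u ≤ v := by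
  induction h with
  | refl => exact le_rfl
  | tail _ hstep ih => exact ih.trans (parent_lt hstep).le

lemma ancestor_of_lt (hπ : IsAxis π π') (hp : p ∈ A) (hq : q ∈ A) (hline : π' p = π' q)
    (hlt : π p < π q) : Ancestor A p q := by
  induction q using WellFoundedLT.induction with
  | _ q ih =>
  obtain ⟨r, hr⟩ := exists_parentAlong hq ⟨p, hp, hline, hlt⟩
  have hline' : π' p = π' r := hline.trans hr.2.2.1.symm
  rcases (hr.2.2.2.2 p hp hline hlt).eq_or_lt with heq | hlt'
  · rw [hπ.ext heq hline']
    exact hr.ancestor hπ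
  · exact (ih r (hr.lt hπ) hr.2.1 hline' hlt').trans (hr.ancestor hπ)

lemma Ancestor.total (hA : IsNAT A) (hu : Ancestor A u w) (hv : Ancestor A v w) :
    Ancestor A u v ∨ Ancestor A v u := by
  induction w using WellFoundedLT.induction with
  | _ w ih =>
  rcases hu.cases_tail with rfl | ⟨c, hc, hcw⟩
  · exact .inr hv
  rcases hv.cases_tail with rfl | ⟨d, hd, hdw⟩
  · exact .inl hu
  obtain rfl := parent_unique hA hcw hdw
  exact ih c (parent_lt hcw) hc hd

lemma exists_line_start (hπ : IsAxis π π') (hp : p ∈ A) :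
    ∃ u ∈ A, ¬ HasPredAlong π' π A u ∧
      Relation.ReflTransGen (fun x y => ParentAlong π' π A y x) u p := by
  induction p using WellFoundedLT.induction with
  | _ p ih =>
  by_cases h : HasPredAlong π' π A p
  · obtain ⟨q, hq⟩ := exists_parentAlong hp h
    obtain ⟨u, hu, hnu, hchain⟩ := ih q (hq.lt hπ.symm) hq.2.1
    exact ⟨u, hu, hnu, hchain.tail hq⟩
  · exact ⟨p, hp, h, .refl⟩

lemma apply_eq_of_chain (h : Relation.ReflTransGen (fun x y => ParentAlong π' π A y x) u p) :
    π u = π p := by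
  induction h with
  | refl => rfl
  | tail _ hstep ih => exact ih.trans hstep.2.2.1

lemma exists_child_ancestor (hA : IsNAT A) (hπ : IsAxis π π') (hp : p ∈ A) (h0 : π p ≠ 0) :
    ∃ u ∈ Children π π' A, π u = π p ∧ Ancestor A u p := by
  obtain ⟨u, hu, hnu, hchain⟩ := exists_line_start hπ hp
  have hπu : π u = π p := apply_eq_of_chain hchain
  have hne : u ≠ (0, 0) := by
    rintro rfl
    exact h0 (hπu ▸ hπ.apply_zero)
  exact ⟨u, (mem_children_iff hA hπ).2 ⟨hu, hne, hnu⟩, hπu,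
    Relation.ReflTransGen.mono (fun _ _ h => (parent_iff_parentAlong hπ).2 (.inr h)) _ _ hchain⟩

lemma Children.apply_ne_zero (hu : u ∈ Children π π' A) : π u ≠ 0 := by
  obtain ⟨-, -, r, -, -, hr⟩ := hu
  omega

lemma injOn_children (hA : IsNAT A) (hπ : IsAxis π π') : Set.InjOn π (Children π π' A) := by
  intro u hu v hv h
  refine hπ.ext h ?_
  have hu' := ((mem_children_iff hA hπ).1 hu).2.2
  have hv' := ((mem_children_iff hA hπ).1 hv).2.2
  by_contra hne
  rcases Nat.lt_or_gt_of_ne hne with hlt | hlt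
  exacts [hv' ⟨u, hu.1, h, hlt⟩, hu' ⟨v, hv.1, h.symm, hlt⟩]

lemma Ancestor.apply_lt (hA : IsNAT A) (hπ : IsAxis π π') (hu : u ∈ Children π π' A)
    (hv : v ∈ Children π π' A) (hne : u ≠ v) (h : Ancestor A u v) : π u < π v :=
  (hπ.monotone h.le).lt_of_ne fun heq => hne (injOn_children hA hπ hu hv heq)

lemma eq_Icc_one_ncard {T : Set ℕ} (hT : T.Finite) (h0 : 0 ∉ T) (h : ∀ x ∈ T, Set.Icc 1 x ⊆ T) :
    T = Set.Icc 1 T.ncard := by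
  have hcard (n : ℕ) : (Set.Icc 1 n).ncard = n := by
    rw [← Finset.coe_Icc, Set.ncard_coe_finset, Nat.card_Icc, Nat.add_sub_cancel]
  refine Set.eq_of_subset_of_ncard_le (fun x hx => ⟨?_, ?_⟩) (hcard _).le (Set.finite_Icc _ _)
  · exact Nat.one_le_iff_ne_zero.2 fun hx0 => h0 (hx0 ▸ hx)
  · simpa only [hcard] using Set.ncard_le_ncard (h x hx) hT

lemma image_children (hA : IsNAT A) (hπ : IsAxis π π') :
    π '' Children π π' A = Set.Icc 1 (Children π π' A).ncard := by
  rw [← (injOn_children hA hπ).ncard_image]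
  refine eq_Icc_one_ncard ((A.finite_toSet.subset fun u hu => hu.1).image π) ?_ ?_
  · rintro ⟨u, hu, h⟩
    exact Children.apply_ne_zero hu h
  · rintro _ ⟨u, hu, rfl⟩ x ⟨hx1, hx⟩
    rcases hx.eq_or_lt with rfl | hlt
    · exact ⟨u, hu, rfl⟩
    obtain ⟨q, hq, rfl⟩ := hA.exists_apply_eq hπ hu.1 hlt
    obtain ⟨w, hw, hwq, -⟩ := exists_child_ancestor hA hπ hq (by omega)
    exact ⟨w, hw, hwq⟩

def linExts (A : Finset (ℕ × ℕ)) (S : Set (ℕ × ℕ)) : Set (S → ℕ) :=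
  {f | Function.Injective f ∧ Set.range f = Set.Icc 1 S.ncard ∧
    ∀ u v : S, (u : ℕ × ℕ) ≠ v → Ancestor A u v → f u < f v}

lemma linExts.mem_Icc {S : Set (ℕ × ℕ)} {f : S → ℕ} (hf : f ∈ linExts A S) (u : S) :
    f u ∈ Set.Icc 1 S.ncard :=
  hf.2.1 ▸ ⟨u, rfl⟩

open Classical in
/-- Sends `π u` to `ℓ u` for every child `u` (well defined as `π` is injective on children), and
every other value, in particular `0`, to `0`. -/
noncomputable def relabel (π π' : ℕ × ℕ → ℕ) (A : Finset (ℕ × ℕ)) (ℓ : Children π π' A → ℕ)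
    (x : ℕ) : ℕ :=
  if h : ∃ u : Children π π' A, π u = x then ℓ h.choose else 0

section relabel

variable {ℓ : Children π π' A → ℕ}

lemma relabel_apply (hA : IsNAT A) (hπ : IsAxis π π') (u : Children π π' A) :
    relabel π π' A ℓ (π u) = ℓ u := by
  have h : ∃ v : Children π π' A, π v = π u := ⟨u, rfl⟩
  rw [relabel, dif_pos h]
  exact congrArg ℓ (Subtype.ext (injOn_children hA hπ h.choose.2 u.2 h.choose_spec))

lemma relabel_zero : relabel π π' A ℓ 0 = 0 :=
  dif_neg fun ⟨u, hu⟩ => Children.apply_ne_zero u.2 hu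

lemma relabel_le (hℓ : ℓ ∈ linExts A (Children π π' A)) (x : ℕ) :
    relabel π π' A ℓ x ≤ (Children π π' A).ncard := by
  unfold relabel
  split_ifs
  exacts [(linExts.mem_Icc hℓ _).2, Nat.zero_le _]

lemma relabel_pos (hA : IsNAT A) (hπ : IsAxis π π') (hℓ : ℓ ∈ linExts A (Children π π' A))
    (hp : p ∈ A) (h0 : π p ≠ 0) : 0 < relabel π π' A ℓ (π p) := by
  obtain ⟨u, hu, hup, -⟩ := exists_child_ancestor hA hπ hp h0
  rw [← hup, relabel_apply hA hπ ⟨u, hu⟩]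
  exact (linExts.mem_Icc hℓ _).1

lemma apply_eq_of_relabel_eq (hA : IsNAT A) (hπ : IsAxis π π')
    (hℓ : ℓ ∈ linExts A (Children π π' A)) (hp : p ∈ A) (hq : q ∈ A)
    (h : relabel π π' A ℓ (π p) = relabel π π' A ℓ (π q)) : π p = π q := by
  by_cases hp0 : π p = 0 <;> by_cases hq0 : π q = 0
  · rw [hp0, hq0]
  · rw [hp0, relabel_zero] at h
    exact absurd h (relabel_pos hA hπ hℓ hq hq0).ne
  · rw [hq0, relabel_zero] at h
    exact absurd h (relabel_pos hA hπ hℓ hp hp0).ne'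
  · obtain ⟨u, hu, hup, -⟩ := exists_child_ancestor hA hπ hp hp0
    obtain ⟨v, hv, hvq, -⟩ := exists_child_ancestor hA hπ hq hq0
    rw [← hup, ← hvq, relabel_apply hA hπ ⟨u, hu⟩, relabel_apply hA hπ ⟨v, hv⟩] at h
    obtain rfl : u = v := congrArg Subtype.val (hℓ.1 h)
    exact hup.symm.trans hvq

/-- The children `u`, `v` with `π u = π p` and `π v = π q` are both ancestors of `q`, hence
comparable, and `v` cannot be an ancestor of `u` since `π p < π q`. -/
lemma relabel_lt_relabel (hA : IsNAT A) (hπ : IsAxis π π') (hℓ : ℓ ∈ linExts A (Children π π' A))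
    (hp : p ∈ A) (hq : q ∈ A) (hline : π' p = π' q) (hlt : π p < π q) :
    relabel π π' A ℓ (π p) < relabel π π' A ℓ (π q) := by
  obtain ⟨v, hv, hvq, hvanc⟩ := exists_child_ancestor hA hπ hq (by omega)
  rw [← hvq, relabel_apply hA hπ ⟨v, hv⟩]
  by_cases hp0 : π p = 0
  · rw [hp0, relabel_zero]
    exact (linExts.mem_Icc hℓ _).1
  obtain ⟨u, hu, hup, huanc⟩ := exists_child_ancestor hA hπ hp hp0
  rw [← hup, relabel_apply hA hπ ⟨u, hu⟩]
  have hne : u ≠ v := by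
    rintro rfl
    omega
  rcases Ancestor.total hA (huanc.trans (ancestor_of_lt hπ hp hq hline hlt)) hvanc with h | h
  · exact hℓ.2.2 ⟨u, hu⟩ ⟨v, hv⟩ hne h
  · have := hπ.monotone h.le
    omega

lemma relabel_lt_relabel_iff (hA : IsNAT A) (hπ : IsAxis π π')
    (hℓ : ℓ ∈ linExts A (Children π π' A)) (hp : p ∈ A) (hq : q ∈ A) (hline : π' p = π' q) :
    relabel π π' A ℓ (π p) < relabel π π' A ℓ (π q) ↔ π p < π q := by
  refine ⟨fun h => ?_, relabel_lt_relabel hA hπ hℓ hp hq hline⟩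
  rcases lt_trichotomy (π p) (π q) with hlt | heq | hgt
  · exact hlt
  · rw [heq] at h
    exact absurd h (lt_irrefl _)
  · exact absurd h (relabel_lt_relabel hA hπ hℓ hq hp hline.symm hgt).asymm

end relabel

def IsTreeIso (A A' : Finset (ℕ × ℕ)) (f : ℕ × ℕ → ℕ × ℕ) : Prop :=
  Set.BijOn f A A' ∧ f (0, 0) = (0, 0) ∧ ∀ p ∈ A, ∀ q ∈ A,
    (LeftParent A p q ↔ LeftParent A' (f p) (f q)) ∧
      (RightParent A p q ↔ RightParent A' (f p) (f q))

namespace IsTreeIso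

variable {f g : ℕ × ℕ → ℕ × ℕ}

lemma parentAlong_iff (hf : IsTreeIso A A' f) (hπ : IsAxis π π') (hp : p ∈ A) (hq : q ∈ A) :
    ParentAlong π π' A p q ↔ ParentAlong π π' A' (f p) (f q) := by
  rcases hπ with ⟨rfl, rfl⟩ | ⟨rfl, rfl⟩
  exacts [(hf.2.2 p hp q hq).1, (hf.2.2 p hp q hq).2]

lemma bijOn_children (hf : IsTreeIso A A' f) (hπ : IsAxis π π') :
    Set.BijOn f (Children π π' A) (Children π π' A') := by
  refine ⟨fun p hp => ?_, hf.1.injOn.mono fun _ hp => hp.1, fun p' hp' => ?_⟩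
  · obtain ⟨q, hq⟩ := exists_parentAlong hp.1 hp.2.2
    exact ((hf.parentAlong_iff hπ hp.1 hq.2.1).1 hq).mem_children hπ
  · obtain ⟨q', hq'⟩ := exists_parentAlong hp'.1 hp'.2.2
    obtain ⟨p, hp, rfl⟩ := hf.1.surjOn hp'.1
    obtain ⟨q, hq, rfl⟩ := hf.1.surjOn hq'.2.1
    exact ⟨p, ((hf.parentAlong_iff hπ hp hq).2 hq').mem_children hπ, rfl⟩

lemma ancestor (hf : IsTreeIso A A' f) (h : Ancestor A u v) : Ancestor A' (f u) (f v) := by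
  induction h with
  | refl => exact .refl
  | tail _ hstep ih =>
    refine ih.tail ?_
    rcases hstep with h | h
    exacts [.inl ((hf.2.2 _ h.1 _ h.2.1).1.1 h), .inr ((hf.2.2 _ h.1 _ h.2.1).2.1 h)]

lemma eqOn (hA : IsNAT A) (hf : IsTreeIso A A' f) (hg : IsTreeIso A A' g) : Set.EqOn f g A := by
  intro p hp
  induction p using WellFoundedLT.induction with
  | _ p ih =>
  by_cases h0 : p = (0, 0)
  · rw [h0, hf.2.1, hg.2.1]
  have of_parent {π π' : ℕ × ℕ → ℕ} (hπ : IsAxis π π') (h : HasPredAlong π π' A p) :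
      f p = g p := by
    obtain ⟨q, hq⟩ := exists_parentAlong hp h
    have hfq : f q = g q := ih q (hq.lt hπ) hq.2.1
    have hg' := (hg.parentAlong_iff hπ hp hq.2.1).1 hq
    rw [← hfq] at hg'
    exact ((hf.parentAlong_iff hπ hp hq.2.1).1 hq).child_unique hπ hg'
  rcases (hA.xor .fst_snd hp h0).or with h | h
  exacts [of_parent .fst_snd h, of_parent .snd_fst h]

lemma apply_mem_linExts (hA' : IsNAT A') (hf : IsTreeIso A A' f) (hπ : IsAxis π π') :
    (fun u : Children π π' A => π (f u)) ∈ linExts A (Children π π' A) := by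
  have hbij := hf.bijOn_children hπ
  refine ⟨fun u v h => Subtype.ext (hbij.injOn u.2 v.2
      (injOn_children hA' hπ (hbij.mapsTo u.2) (hbij.mapsTo v.2) h)), ?_,
    fun u v hne h => Ancestor.apply_lt hA' hπ (hbij.mapsTo u.2) (hbij.mapsTo v.2)
      (fun heq => hne (hf.1.injOn u.2.1 v.2.1 heq)) (hf.ancestor h)⟩
  have hcard : (Children π π' A').ncard = (Children π π' A).ncard := by
    rw [← hbij.image_eq, hbij.injOn.ncard_image]
  rw [← hcard, ← image_children hA' hπ, ← hbij.image_eq, Set.image_image, Set.image_eq_range]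

/-- `f` preserves `π` along the chain of `π'`-parents leading to `p` from the first point with
the same `π`-value, and that point is the root or a child. -/
lemma apply_eq_relabel (hA : IsNAT A) (hf : IsTreeIso A A' f) (hπ : IsAxis π π') (hp : p ∈ A) :
    π (f p) = relabel π π' A (fun u => π (f u)) (π p) := by
  obtain ⟨u, hu, hnu, hchain⟩ := exists_line_start hπ hp
  have hchain' : Relation.ReflTransGen (fun x y => ParentAlong π' π A' y x) (f u) (f p) :=
    Relation.ReflTransGen.lift (r := fun x y => ParentAlong π' π A y x) f
      (fun _ _ h => (hf.parentAlong_iff hπ.symm h.1 h.2.1).1 h) _ _ hchain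
  rw [← apply_eq_of_chain hchain', ← apply_eq_of_chain hchain]
  by_cases hu0 : u = (0, 0)
  · rw [hu0, hf.2.1, hπ.apply_zero, relabel_zero]
  · exact (relabel_apply (ℓ := fun u => π (f u)) hA hπ
      ⟨u, (mem_children_iff hA hπ).2 ⟨hu, hu0, hnu⟩⟩).symm

end IsTreeIso

def RespectsLines (π π' : ℕ × ℕ → ℕ) (A : Finset (ℕ × ℕ)) (G : ℕ × ℕ → ℕ × ℕ) : Prop :=
  (∀ p ∈ A, ∀ q ∈ A, π' (G p) = π' (G q) ↔ π' p = π' q) ∧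
    ∀ p ∈ A, ∀ q ∈ A, π' p = π' q → (π (G p) < π (G q) ↔ π p < π q)

namespace RespectsLines

variable {G : ℕ × ℕ → ℕ × ℕ}

lemma hasPredAlong_image_iff (hG : RespectsLines π π' A G) (hp : p ∈ A) :
    HasPredAlong π π' (A.image G) (G p) ↔ HasPredAlong π π' A p := by
  constructor
  · rintro ⟨_, hr', hline, hlt⟩
    obtain ⟨r, hr, rfl⟩ := Finset.mem_image.1 hr'
    have hline' := (hG.1 r hr p hp).1 hline
    exact ⟨r, hr, hline', (hG.2 r hr p hp hline').1 hlt⟩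
  · rintro ⟨r, hr, hline, hlt⟩
    exact ⟨G r, Finset.mem_image_of_mem G hr, (hG.1 r hr p hp).2 hline,
      (hG.2 r hr p hp hline).2 hlt⟩

lemma parentAlong_image_iff (hG : RespectsLines π π' A G) (hp : p ∈ A) (hq : q ∈ A) :
    ParentAlong π π' (A.image G) (G p) (G q) ↔ ParentAlong π π' A p q := by
  constructor
  · rintro ⟨-, -, hline, hlt, hmax⟩
    have hline' := (hG.1 q hq p hp).1 hline
    refine ⟨hp, hq, hline', (hG.2 q hq p hp hline').1 hlt, fun r hr hrline hrlt => ?_⟩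
    have := hmax (G r) (Finset.mem_image_of_mem G hr) ((hG.1 r hr p hp).2 hrline)
      ((hG.2 r hr p hp hrline).2 hrlt)
    exact not_lt.1 fun h => not_lt.2 this ((hG.2 q hq r hr (hline'.trans hrline.symm)).2 h)
  · rintro ⟨-, -, hline, hlt, hmax⟩
    refine ⟨Finset.mem_image_of_mem G hp, Finset.mem_image_of_mem G hq, (hG.1 q hq p hp).2 hline,
      (hG.2 q hq p hp hline).2 hlt, fun r' hr' hrline hrlt => ?_⟩
    obtain ⟨r, hr, rfl⟩ := Finset.mem_image.1 hr'
    have hrline' := (hG.1 r hr p hp).1 hrline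
    have := hmax r hr hrline' ((hG.2 r hr p hp hrline').1 hrlt)
    exact not_lt.1 fun h => not_lt.2 this ((hG.2 q hq r hr (hline.trans hrline'.symm)).1 h)

lemma injOn (hπ : IsAxis π π') (hG : RespectsLines π π' A G) : Set.InjOn G A := by
  intro p hp q hq h
  have hline := (hG.1 p hp q hq).1 (congrArg π' h)
  refine hπ.ext (le_antisymm (not_lt.1 fun hlt => ?_) (not_lt.1 fun hlt => ?_)) hline
  · exact ((hG.2 q hq p hp hline.symm).2 hlt).ne' (congrArg π h)
  · exact ((hG.2 p hp q hq hline).2 hlt).ne (congrArg π h)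

end RespectsLines

section relabelMap

variable {ℓ : Children π π' A → ℕ} {G : ℕ × ℕ → ℕ × ℕ}

lemma respectsLines_of_relabel (hA : IsNAT A) (hπ : IsAxis π π')
    (hℓ : ℓ ∈ linExts A (Children π π' A)) {μ : Children π' π A → ℕ}
    (hμ : μ ∈ linExts A (Children π' π A))
    (hG : ∀ p, π (G p) = relabel π π' A ℓ (π p) ∧ π' (G p) = relabel π' π A μ (π' p)) :
    RespectsLines π π' A G := by
  refine ⟨fun p hp q hq => ?_, fun p hp q hq hline => ?_⟩
  · rw [(hG p).2, (hG q).2]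
    exact ⟨apply_eq_of_relabel_eq hA hπ.symm hμ hp hq, congrArg _⟩
  · rw [(hG p).1, (hG q).1]
    exact relabel_lt_relabel_iff hA hπ hℓ hp hq hline

lemma exists_mem_image_apply_eq (hA : IsNAT A) (hπ : IsAxis π π')
    (hℓ : ℓ ∈ linExts A (Children π π' A)) (hG : ∀ p, π (G p) = relabel π π' A ℓ (π p))
    {x : ℕ} (hx : x < π (G p)) : ∃ q ∈ A.image G, π q = x := by
  rcases Nat.eq_zero_or_pos x with rfl | hx0
  · exact ⟨G (0, 0), Finset.mem_image_of_mem G hA.1, by rw [hG, hπ.apply_zero, relabel_zero]⟩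
  rw [hG] at hx
  have hxℓ : x ∈ Set.range ℓ := hℓ.2.1 ▸ ⟨hx0, hx.le.trans (relabel_le hℓ _)⟩
  obtain ⟨w, rfl⟩ := hxℓ
  exact ⟨G w, Finset.mem_image_of_mem G w.2.1, by rw [hG, relabel_apply hA hπ w]⟩

end relabelMap

noncomputable def natMap (A : Finset (ℕ × ℕ)) (ℓ : Children Prod.fst Prod.snd A → ℕ)
    (r : Children Prod.snd Prod.fst A → ℕ) (p : ℕ × ℕ) : ℕ × ℕ :=
  (relabel Prod.fst Prod.snd A ℓ p.1, relabel Prod.snd Prod.fst A r p.2)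

section natMap

variable {ℓ : Children Prod.fst Prod.snd A → ℕ} {r : Children Prod.snd Prod.fst A → ℕ}

lemma natMap_zero : natMap A ℓ r (0, 0) = (0, 0) :=
  Prod.ext relabel_zero relabel_zero

lemma respectsLines_natMap (hA : IsNAT A) (hℓ : ℓ ∈ linExts A (Children Prod.fst Prod.snd A))
    (hr : r ∈ linExts A (Children Prod.snd Prod.fst A)) (hπ : IsAxis π π') :
    RespectsLines π π' A (natMap A ℓ r) := by
  rcases hπ with ⟨rfl, rfl⟩ | ⟨rfl, rfl⟩
  exacts [respectsLines_of_relabel hA .fst_snd hℓ hr fun _ => ⟨rfl, rfl⟩,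
    respectsLines_of_relabel hA .snd_fst hr hℓ fun _ => ⟨rfl, rfl⟩]

lemma isNAT_image_natMap (hA : IsNAT A) (hℓ : ℓ ∈ linExts A (Children Prod.fst Prod.snd A))
    (hr : r ∈ linExts A (Children Prod.snd Prod.fst A)) : IsNAT (A.image (natMap A ℓ r)) := by
  refine ⟨Finset.mem_image.2 ⟨_, hA.1, natMap_zero⟩, fun p' hp' hne => ?_, fun p' hp' => ?_⟩
  · obtain ⟨p, hp, rfl⟩ := Finset.mem_image.1 hp'
    have hp0 : p ≠ (0, 0) := by
      rintro rfl
      exact hne natMap_zero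
    have h : Xor (HasPredAlong Prod.snd Prod.fst A p) (HasPredAlong Prod.fst Prod.snd A p) :=
      hA.2.1 p hp hp0
    rw [← (respectsLines_natMap hA hℓ hr .snd_fst).hasPredAlong_image_iff hp,
      ← (respectsLines_natMap hA hℓ hr .fst_snd).hasPredAlong_image_iff hp] at h
    exact h
  · obtain ⟨p, hp, rfl⟩ := Finset.mem_image.1 hp'
    exact ⟨fun x hx => exists_mem_image_apply_eq hA .fst_snd hℓ (fun _ => rfl) hx,
      fun y hy => exists_mem_image_apply_eq hA .snd_fst hr (fun _ => rfl) hy⟩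

lemma isTreeIso_natMap (hA : IsNAT A) (hℓ : ℓ ∈ linExts A (Children Prod.fst Prod.snd A))
    (hr : r ∈ linExts A (Children Prod.snd Prod.fst A)) :
    IsTreeIso A (A.image (natMap A ℓ r)) (natMap A ℓ r) := by
  refine ⟨?_, natMap_zero, fun p hp q hq => ⟨?_, ?_⟩⟩
  · rw [Finset.coe_image]
    exact ((respectsLines_natMap hA hℓ hr .fst_snd).injOn .fst_snd).bijOn_image
  · exact ((respectsLines_natMap hA hℓ hr .fst_snd).parentAlong_image_iff hp hq).symm
  · exact ((respectsLines_natMap hA hℓ hr .snd_fst).parentAlong_image_iff hp hq).symm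

end natMap

lemma injOn_image_natMap (hA : IsNAT A) :
    Set.InjOn (fun lr => A.image (natMap A lr.1 lr.2))
      (linExts A (Children Prod.fst Prod.snd A) ×ˢ linExts A (Children Prod.snd Prod.fst A)) := by
  rintro ⟨ℓ, r⟩ ⟨hℓ, hr⟩ ⟨ℓ', r'⟩ ⟨hℓ', hr'⟩ h
  have hiso' := isTreeIso_natMap hA hℓ' hr'
  rw [← show A.image (natMap A ℓ r) = A.image (natMap A ℓ' r') from h] at hiso'
  have heq := (isTreeIso_natMap hA hℓ hr).eqOn hA hiso'
  refine Prod.ext (funext fun u => ?_) (funext fun v => ?_)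
  · calc ℓ u = (natMap A ℓ r u).1 := (relabel_apply hA .fst_snd u).symm
      _ = (natMap A ℓ' r' u).1 := congrArg Prod.fst (heq u.2.1)
      _ = ℓ' u := relabel_apply hA .fst_snd u
  · calc r v = (natMap A ℓ r v).2 := (relabel_apply hA .snd_fst v).symm
      _ = (natMap A ℓ' r' v).2 := congrArg Prod.snd (heq v.2.1)
      _ = r' v := relabel_apply hA .snd_fst v

lemma IsTreeIso.eq_image_natMap {f : ℕ × ℕ → ℕ × ℕ} (hA : IsNAT A) (hf : IsTreeIso A A' f) :
    A' = A.image (natMap A (fun u => (f u).1) (fun u => (f u).2)) := by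
  apply Finset.coe_injective
  rw [Finset.coe_image, ← hf.1.image_eq]
  exact Set.image_congr fun p hp =>
    Prod.ext (hf.apply_eq_relabel hA .fst_snd hp) (hf.apply_eq_relabel hA .snd_fst hp)

lemma setOf_natIso_eq_image (hA : IsNAT A) :
    {A' | IsNAT A' ∧ NATIso A A'} = (fun lr => A.image (natMap A lr.1 lr.2)) ''
      (linExts A (Children Prod.fst Prod.snd A) ×ˢ linExts A (Children Prod.snd Prod.fst A)) := by
  ext A'
  constructor
  · rintro ⟨hA', hiso⟩
    obtain ⟨f, hf⟩ : ∃ f, IsTreeIso A A' f := hiso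
    exact ⟨(_, _), ⟨hf.apply_mem_linExts hA' .fst_snd, hf.apply_mem_linExts hA' .snd_fst⟩,
      (hf.eq_image_natMap hA).symm⟩
  · rintro ⟨⟨ℓ, r⟩, ⟨hℓ, hr⟩, rfl⟩
    exact ⟨isNAT_image_natMap hA hℓ hr, _, isTreeIso_natMap hA hℓ hr⟩

end

theorem natCount_eq_linear_extensions (A : Finset (ℕ × ℕ)) (hA : IsNAT A) :
    NATcount A = eL A * eR A := by
  rw [NATcount, setOf_natIso_eq_image hA, (injOn_image_natMap hA).ncard_image, Set.ncard_prod]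
  rfl
end
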